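/- Combining the previous two estimates: with U_i as above, Σ_{i_1,i_2=1}^{r} E[U_{i_1} U_{i_2}] ≤ C r^{7α/4} for some constant C and all r ≥ 2. -/

import Mathlib

open MeasureTheory ProbabilityTheory Finset Set

/-!
Write `τ = {S_k}` with `S_k = ξ_0 + ⋯ + ξ_{k-1}`. On the event `S_k = n`, the trace `τ ∩ [0, n]`
is a function of `ξ_0, …, ξ_{k-1}`, while `τ - n` is the renewal set of the shifted sequence
`ξ_{k+·}`, which is independent of them and has the law of `ξ`. Summing over `k` gives the
regeneration identity `E[F(τ ∩ [0, n]) 1_{n∈τ} G(τ - n)] = E[F(τ ∩ [0, n]) 1_{n∈τ}] E[G(τ)]`.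

Now `U_{i₂} = 1_{i₂∈τ} L(τ - i₂)` with `E[L(τ)] = 0`, and for `i₁ + M ≤ i₂` (`M = ⌈r^{α/4}⌉`)
`U_{i₁}` is a function of `τ ∩ [0, i₂]`, so the covariance vanishes off a band of width `M`. On the
band `|U_{i₁} U_{i₂}| ≤ M² 1_{i₁∈τ}`, so the double sum is at most
`2M · M² · Σ_{i ≤ r} u(i) ≤ 2 M³ C r^α / α = O(r^{7α/4})`.
-/

namespace ProbabilityTheory

variable {Ω β : Type*} [MeasurableSpace Ω] [MeasurableSpace β] {μ : Measure Ω}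
  {f : ℕ → Ω → β}

lemma iIndepFun.indepFun_prefix_shift (hf : ∀ i, Measurable (f i)) (h : iIndepFun f μ) (k : ℕ) :
    IndepFun (fun ω (i : Fin k) => f i ω) (fun ω m => f (k + m) ω) μ := by
  have hST : Disjoint (Set.Iio k) (Set.Ici k) := Set.Iio_disjoint_Ici le_rfl
  refine (IndepFun_iff_Indep _ _ _).2 <| indep_of_indep_of_le_right
    (indep_of_indep_of_le_left (indep_iSup_of_disjoint (fun i => (hf i).comap_le) h hST) ?_) ?_
  · exact Measurable.comap_le <| @measurable_pi_lambda _ _ _ (⨆ i ∈ Set.Iio k, _) _ _ fun i =>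
      .of_comap_le (le_iSup₂_of_le (i : ℕ) i.2 le_rfl)
  · exact Measurable.comap_le <| @measurable_pi_lambda _ _ _ (⨆ i ∈ Set.Ici k, _) _ _ fun m =>
      .of_comap_le (le_iSup₂_of_le (k + m) (Nat.le_add_right k m) le_rfl)

lemma iIndepFun.map_shift_eq (hf : ∀ i, Measurable (f i)) (h : iIndepFun f μ)
    (hid : ∀ n, μ.map (f n) = μ.map (f 0)) (k : ℕ) :
    μ.map (fun ω m => f (k + m) ω) = μ.map (fun ω m => f m ω) := by
  rw [(h.precomp (add_right_injective k)).map_fun_eq_infinitePi_map (fun m => hf _),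
    h.map_fun_eq_infinitePi_map hf]
  simp_rw [hid]

lemma iIndepFun.integral_prefix_mul_shift (hf : ∀ i, Measurable (f i)) (h : iIndepFun f μ)
    (hid : ∀ n, μ.map (f n) = μ.map (f 0)) (k : ℕ) {Φ : (Fin k → β) → ℝ} {Ψ : (ℕ → β) → ℝ}
    (hΦ : Measurable Φ) (hΨ : Measurable Ψ) :
    ∫ ω, Φ (fun i => f i ω) * Ψ (fun m => f (k + m) ω) ∂μ
      = (∫ ω, Φ (fun i => f i ω) ∂μ) * ∫ ω, Ψ (fun m => f m ω) ∂μ := by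
  have hshift : Measurable fun ω m => f (k + m) ω := measurable_pi_lambda _ fun m => hf _
  have hseq : Measurable fun ω m => f m ω := measurable_pi_lambda _ hf
  have hprefix : Measurable fun ω (i : Fin k) => f i ω := measurable_pi_lambda _ fun i => hf _
  refine (((h.indepFun_prefix_shift hf k).comp hΦ hΨ).integral_mul_eq_mul_integral
      (hΦ.comp hprefix).aestronglyMeasurable (hΨ.comp hshift).aestronglyMeasurable).trans ?_
  congr 1
  rw [Function.comp_def, ← integral_map (f := Ψ) hshift.aemeasurable hΨ.aestronglyMeasurable,
    h.map_shift_eq hf hid, integral_map hseq.aemeasurable hΨ.aestronglyMeasurable]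

end ProbabilityTheory

lemma monotone_sum_range (x : ℕ → ℕ) : Monotone fun k => ∑ m ∈ range k, x m :=
  fun _ _ h => sum_le_sum_of_subset (range_mono h)

lemma strictMono_sum_range {x : ℕ → ℕ} (hx : ∀ m, 1 ≤ x m) :
    StrictMono fun k => ∑ m ∈ range k, x m :=
  strictMono_nat_of_lt_succ fun k => by rw [sum_range_succ]; have := hx k; omega

def renewalSet (x : ℕ → ℕ) : Set ℕ := Set.range fun k => ∑ m ∈ range k, x m

namespace renewalSet

variable {x y : ℕ → ℕ} {k n : ℕ}

lemma sum_range_mem (x : ℕ → ℕ) (k : ℕ) : ∑ m ∈ range k, x m ∈ renewalSet x := ⟨k, rfl⟩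

lemma inter_Iic (hk : ∑ m ∈ range k, x m = n) :
    renewalSet x ∩ Set.Iic n = (fun l => ∑ m ∈ range l, x m) '' Set.Iic k := by
  ext i
  constructor
  · rintro ⟨⟨l, rfl⟩, hl⟩
    rcases le_total l k with hlk | hkl
    · exact ⟨l, hlk, rfl⟩
    · have := monotone_sum_range x hkl
      exact ⟨k, Set.mem_Iic.2 le_rfl, by simp only [Set.mem_Iic] at hl this ⊢; omega⟩
  · rintro ⟨l, hl, rfl⟩
    exact ⟨⟨l, rfl⟩, hk ▸ monotone_sum_range x hl⟩

lemma inter_Iic_congr (hxy : ∀ m < k, x m = y m) (hk : ∑ m ∈ range k, x m = n) :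
    renewalSet x ∩ Set.Iic n = renewalSet y ∩ Set.Iic n := by
  have hsum : ∀ l ≤ k, ∑ m ∈ range l, x m = ∑ m ∈ range l, y m := fun l hl =>
    sum_congr rfl fun m hm => hxy m ((mem_range.1 hm).trans_le hl)
  rw [inter_Iic hk, inter_Iic ((hsum k le_rfl).symm.trans hk)]
  exact image_congr fun l hl => hsum l hl

lemma preimage_add (hk : ∑ m ∈ range k, x m = n) :
    (n + ·) ⁻¹' renewalSet x = renewalSet fun m => x (k + m) := by
  ext j
  constructor
  · rintro ⟨l, hl⟩
    rcases le_total l k with hlk | hkl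
    · have := monotone_sum_range x hlk
      simp only at hl this
      exact ⟨0, by simp only [range_zero, sum_empty]; omega⟩
    · obtain ⟨l, rfl⟩ := Nat.exists_eq_add_of_le hkl
      simp only [sum_range_add, hk] at hl
      exact ⟨l, by simp only; omega⟩
  · rintro ⟨l, rfl⟩
    exact ⟨k + l, by simp only [sum_range_add, hk]⟩

lemma indicator_eq_sum (hx : ∀ m, 1 ≤ x m) (n : ℕ) :
    (renewalSet x).indicator (1 : ℕ → ℝ) n
      = ∑ k ∈ range (n + 1), if ∑ m ∈ range k, x m = n then 1 else 0 := by
  by_cases hn : n ∈ renewalSet x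
  · obtain ⟨k, rfl⟩ := hn
    have hk : k < ∑ m ∈ range k, x m + 1 := Nat.lt_succ_of_le ((strictMono_sum_range hx).id_le k)
    simp_rw [(strictMono_sum_range hx).injective.eq_iff]
    rw [sum_ite_eq', if_pos (mem_range.2 hk), indicator_of_mem (sum_range_mem x k), Pi.one_apply]
  · rw [indicator_of_notMem hn]
    refine (sum_eq_zero fun k _ => if_neg ?_).symm
    rintro rfl
    exact hn (sum_range_mem x k)

lemma measurableSet_setOf_mem (j : ℕ) : MeasurableSet {x : ℕ → ℕ | j ∈ renewalSet x} := by
  have : {x : ℕ → ℕ | j ∈ renewalSet x} = ⋃ k, (fun x : ℕ → ℕ => ∑ m ∈ range k, x m) ⁻¹' {j} := by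
    ext x; simp [renewalSet]
  rw [this]
  exact .iUnion fun k =>
    (Finset.measurable_sum _ fun m _ => measurable_pi_apply m) (measurableSet_singleton j)

lemma history_mul_indicator_mul_eq_sum (hx : ∀ m, 1 ≤ x m) (F G : Set ℕ → ℝ) (n : ℕ) :
    F (renewalSet x ∩ Set.Iic n) * (renewalSet x).indicator 1 n * G ((n + ·) ⁻¹' renewalSet x)
      = ∑ k ∈ range (n + 1), (F (renewalSet x ∩ Set.Iic n) *
          if ∑ m ∈ range k, x m = n then 1 else 0) * G (renewalSet fun m => x (k + m)) := by
  rw [indicator_eq_sum hx, mul_sum, sum_mul]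
  refine sum_congr rfl fun k _ => ?_
  split_ifs with hk
  · rw [preimage_add hk]
  · simp

end renewalSet

/-- The history `F (τ ∩ [0, n])` on the event that the `k`-th renewal epoch is `n`, read off from
the first `k` increments (a function on a countable type, hence measurable). -/
noncomputable def epochHistory (F : Set ℕ → ℝ) (n k : ℕ) (v : Fin k → ℕ) : ℝ :=
  F (renewalSet (Function.extend Fin.val v 0) ∩ Set.Iic n) *
    if ∑ m ∈ range k, Function.extend Fin.val v 0 m = n then 1 else 0

lemma epochHistory_prefix (F : Set ℕ → ℝ) (n k : ℕ) (x : ℕ → ℕ) :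
    epochHistory F n k (fun i => x i)
      = F (renewalSet x ∩ Set.Iic n) * if ∑ m ∈ range k, x m = n then 1 else 0 := by
  have hxy : ∀ m < k, Function.extend Fin.val (fun i : Fin k => x i) 0 m = x m :=
    fun m hm => Fin.val_injective.extend_apply _ _ ⟨m, hm⟩
  have hsum : ∑ m ∈ range k, Function.extend Fin.val (fun i : Fin k => x i) 0 m
      = ∑ m ∈ range k, x m := sum_congr rfl fun m hm => hxy m (mem_range.1 hm)
  rw [epochHistory, hsum]
  split_ifs with h
  · rw [renewalSet.inter_Iic_congr hxy (hsum.trans h)]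
  · simp

lemma abs_epochHistory_le {F : Set ℕ → ℝ} {A : ℝ} (hF : ∀ s, |F s| ≤ A) (n k : ℕ)
    (v : Fin k → ℕ) : |epochHistory F n k v| ≤ A := by
  rw [epochHistory, abs_mul]
  split_ifs <;> simp [hF, (abs_nonneg _).trans (hF ∅)]

section RenewalProcess

variable {Ω : Type*} [MeasurableSpace Ω] {μ : Measure Ω} {ξ : ℕ → Ω → ℕ}

lemma measurableSet_setOf_mem_renewalSet (hξ : ∀ n, Measurable (ξ n)) (j : ℕ) :
    MeasurableSet {ω | j ∈ renewalSet (ξ · ω)} :=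
  measurable_pi_lambda _ hξ (renewalSet.measurableSet_setOf_mem j)

lemma integral_indicator_mem_renewalSet (hξ : ∀ n, Measurable (ξ n)) (j : ℕ) :
    ∫ ω, (renewalSet (ξ · ω)).indicator 1 j ∂μ = μ.real {ω | j ∈ renewalSet (ξ · ω)} :=
  integral_indicator_one (measurableSet_setOf_mem_renewalSet hξ j)

theorem integral_history_mul_indicator_mul_future [IsProbabilityMeasure μ]
    (hξ : ∀ n, Measurable (ξ n)) (hind : iIndepFun ξ μ) (hid : ∀ n, μ.map (ξ n) = μ.map (ξ 0))
    (hpos : ∀ n ω, 1 ≤ ξ n ω) {F G : Set ℕ → ℝ} {A B : ℝ} (hF : ∀ s, |F s| ≤ A)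
    (hG : ∀ s, |G s| ≤ B) (hGm : Measurable (G ∘ renewalSet)) (n : ℕ) :
    ∫ ω, F (renewalSet (ξ · ω) ∩ Set.Iic n) * (renewalSet (ξ · ω)).indicator 1 n *
        G ((n + ·) ⁻¹' renewalSet (ξ · ω)) ∂μ
      = (∫ ω, F (renewalSet (ξ · ω) ∩ Set.Iic n) * (renewalSet (ξ · ω)).indicator 1 n ∂μ) *
          ∫ ω, G (renewalSet (ξ · ω)) ∂μ := by
  have hΦ (k : ℕ) : Measurable fun ω => epochHistory F n k fun i => ξ i ω :=
    (measurable_of_countable (epochHistory F n k)).comp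
      (measurable_pi_lambda (fun ω (i : Fin k) => ξ i ω) fun i => hξ i)
  have hΨ (k : ℕ) : Measurable fun ω => G (renewalSet fun m => ξ (k + m) ω) :=
    hGm.comp (measurable_pi_lambda _ fun m => hξ _)
  have hΦint (k : ℕ) : Integrable (fun ω => epochHistory F n k fun i => ξ i ω) μ :=
    .of_bound (hΦ k).aestronglyMeasurable A (ae_of_all _ fun ω => abs_epochHistory_le hF n k _)
  have hΦΨint (k : ℕ) : Integrable (fun ω => (epochHistory F n k fun i => ξ i ω) *
      G (renewalSet fun m => ξ (k + m) ω)) μ :=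
    (hΦint k).mul_bdd (hΨ k).aestronglyMeasurable (ae_of_all _ fun ω => hG _)
  have hsplit (ω : Ω) := renewalSet.history_mul_indicator_mul_eq_sum (hpos · ω) F G n
  have hsplit' (ω : Ω) := renewalSet.history_mul_indicator_mul_eq_sum (hpos · ω) F 1 n
  simp only [Pi.one_apply, mul_one, ← epochHistory_prefix] at hsplit hsplit'
  rw [funext hsplit, funext hsplit', integral_finsetSum _ fun k _ => hΦΨint k,
    integral_finsetSum _ fun k _ => hΦint k, sum_mul]
  exact sum_congr rfl fun k _ =>
    hind.integral_prefix_mul_shift hξ hid k (measurable_of_countable _) hGm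

end RenewalProcess

section Fluctuation

variable {a u : ℕ → ℝ} {M : ℕ}

variable (a u M) in
noncomputable def lookahead (s : Set ℕ) : ℝ := ∑ j ∈ Icc 1 M, a j * (s.indicator 1 j - u j)

variable (a u M) in
noncomputable def fluctuation (i : ℕ) (s : Set ℕ) : ℝ :=
  s.indicator 1 i * lookahead a u M ((i + ·) ⁻¹' s)

lemma abs_lookahead_le (hu0 : ∀ j, 0 ≤ u j) (hu1 : ∀ j, u j ≤ 1) (s : Set ℕ) :
    |lookahead a u M s| ≤ ∑ j ∈ Icc 1 M, |a j| := by
  classical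
  refine (abs_sum_le_sum_abs _ _).trans (sum_le_sum fun j _ => ?_)
  rw [abs_mul]
  refine mul_le_of_le_one_right (abs_nonneg _) ?_
  rw [Set.indicator_apply, abs_le]
  have := hu0 j
  have := hu1 j
  split_ifs <;> constructor <;> simp <;> linarith

lemma abs_fluctuation_le (hu0 : ∀ j, 0 ≤ u j) (hu1 : ∀ j, u j ≤ 1) (i : ℕ) (s : Set ℕ) :
    |fluctuation a u M i s| ≤ s.indicator 1 i * ∑ j ∈ Icc 1 M, |a j| := by
  have h1 : (0 : ℝ) ≤ s.indicator 1 i := Set.indicator_nonneg (fun _ _ => zero_le_one) _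
  rw [fluctuation, abs_mul, abs_of_nonneg h1]
  exact mul_le_mul_of_nonneg_left (abs_lookahead_le hu0 hu1 _) h1

lemma fluctuation_inter_Iic {i n : ℕ} (h : i + M ≤ n) (s : Set ℕ) :
    fluctuation a u M i (s ∩ Set.Iic n) = fluctuation a u M i s := by
  classical
  have hmem : ∀ m ≤ n, (s ∩ Set.Iic n).indicator (1 : ℕ → ℝ) m = s.indicator 1 m := fun m hm => by
    simp [Set.indicator_apply, hm]
  rw [fluctuation, fluctuation, hmem i (by omega), lookahead, lookahead]
  refine congrArg _ (sum_congr rfl fun j hj => ?_)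
  have := (Finset.mem_Icc.1 hj).2
  have hpre (t : Set ℕ) : ((i + ·) ⁻¹' t).indicator (1 : ℕ → ℝ) j = t.indicator 1 (i + j) := by
    simp [Set.indicator_apply]
  rw [hpre, hpre, hmem _ (by omega)]

lemma measurable_lookahead_comp : Measurable (lookahead a u M ∘ renewalSet) := by
  simp only [Function.comp_def, lookahead]
  exact Finset.measurable_sum _ fun j _ =>
    ((measurable_one.indicator (renewalSet.measurableSet_setOf_mem j)).sub_const _).const_mul _

end Fluctuation

lemma sum_sum_le_of_banded {c : ℕ → ℕ → ℝ} {b : ℕ → ℝ} {M : ℕ} (s : Finset ℕ)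
    (hfar : ∀ i j, i + M ≤ j ∨ j + M ≤ i → c i j = 0) (hle : ∀ i j, c i j ≤ b i) :
    ∑ i ∈ s, ∑ j ∈ s, c i j ≤ 2 * M * ∑ i ∈ s, b i := by
  rw [mul_sum]
  refine sum_le_sum fun i _ => ?_
  have hb : 0 ≤ b i := (hfar i (i + M) (.inl le_rfl)).symm.le.trans (hle i (i + M))
  have hcard : #{j ∈ s | j < i + M ∧ i < j + M} ≤ 2 * M := by
    refine (card_le_card fun j hj => ?_).trans (Nat.card_Ico (i + 1 - M) (i + M)).le |>.trans ?_
    · exact Finset.mem_Ico.2 (by simp only [Finset.mem_filter] at hj; omega)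
    · omega
  calc ∑ j ∈ s, c i j = ∑ j ∈ s with j < i + M ∧ i < j + M, c i j :=
        (sum_filter_of_ne fun j _ hj => by by_contra h; exact hj (hfar i j (by omega))).symm
    _ ≤ #{j ∈ s | j < i + M ∧ i < j + M} • b i := sum_le_card_nsmul _ _ _ fun j _ => hle i j
    _ ≤ 2 * M * b i := by
        rw [nsmul_eq_mul]; exact mul_le_mul_of_nonneg_right (by exact_mod_cast hcard) hb

section Covariance

variable {Ω : Type*} [MeasurableSpace Ω] {μ : Measure Ω} [IsProbabilityMeasure μ]
  {ξ : ℕ → Ω → ℕ} {a u : ℕ → ℝ} {M : ℕ}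

lemma integral_lookahead_renewalSet (hξ : ∀ n, Measurable (ξ n))
    (hu : ∀ j, u j = μ.real {ω | j ∈ renewalSet (ξ · ω)}) :
    ∫ ω, lookahead a u M (renewalSet (ξ · ω)) ∂μ = 0 := by
  have hint (j : ℕ) : Integrable (fun ω => (renewalSet (ξ · ω)).indicator (1 : ℕ → ℝ) j) μ :=
    (integrable_const 1).indicator (measurableSet_setOf_mem_renewalSet hξ j)
  simp only [lookahead]
  refine (integral_finsetSum _ fun j _ => ?_).trans (sum_eq_zero fun j _ => ?_)
  · exact ((hint j).sub (integrable_const _)).const_mul _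
  rw [integral_const_mul, integral_sub (hint j) (integrable_const _),
    integral_indicator_mem_renewalSet hξ, ← hu, integral_const, probReal_univ, one_smul, sub_self,
    mul_zero]

theorem integral_fluctuation_mul_fluctuation_of_add_le (hξ : ∀ n, Measurable (ξ n))
    (hind : iIndepFun ξ μ) (hid : ∀ n, μ.map (ξ n) = μ.map (ξ 0)) (hpos : ∀ n ω, 1 ≤ ξ n ω)
    (hu : ∀ j, u j = μ.real {ω | j ∈ renewalSet (ξ · ω)}) {i₁ i₂ : ℕ} (h : i₁ + M ≤ i₂) :
    ∫ ω, fluctuation a u M i₁ (renewalSet (ξ · ω)) * fluctuation a u M i₂ (renewalSet (ξ · ω)) ∂μ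
      = 0 := by
  have hu0 (j : ℕ) : 0 ≤ u j := hu j ▸ measureReal_nonneg
  have hu1 (j : ℕ) : u j ≤ 1 := hu j ▸ measureReal_le_one
  have hF (s : Set ℕ) : |fluctuation a u M i₁ s| ≤ ∑ j ∈ Icc 1 M, |a j| :=
    (abs_fluctuation_le hu0 hu1 i₁ s).trans <| mul_le_of_le_one_left
      (sum_nonneg fun _ _ => abs_nonneg _)
      (Set.indicator_apply_le' (fun _ => le_rfl) fun _ => zero_le_one)
  have := integral_history_mul_indicator_mul_future hξ hind hid hpos hF
    (abs_lookahead_le (a := a) (M := M) hu0 hu1) measurable_lookahead_comp i₂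
  rw [integral_lookahead_renewalSet hξ hu, mul_zero] at this
  simp only [fluctuation_inter_Iic h, mul_assoc] at this
  exact this

theorem integral_fluctuation_mul_fluctuation_le (hξ : ∀ n, Measurable (ξ n))
    (hu : ∀ j, u j = μ.real {ω | j ∈ renewalSet (ξ · ω)}) (i₁ i₂ : ℕ) :
    ∫ ω, fluctuation a u M i₁ (renewalSet (ξ · ω)) * fluctuation a u M i₂ (renewalSet (ξ · ω)) ∂μ
      ≤ (∑ j ∈ Icc 1 M, |a j|) ^ 2 * u i₁ := by
  have hu0 (j : ℕ) : 0 ≤ u j := hu j ▸ measureReal_nonneg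
  have hu1 (j : ℕ) : u j ≤ 1 := hu j ▸ measureReal_le_one
  set S := ∑ j ∈ Icc 1 M, |a j|
  have hS : 0 ≤ S := sum_nonneg fun _ _ => abs_nonneg _
  have hbound (ω : Ω) : ‖fluctuation a u M i₁ (renewalSet (ξ · ω)) *
      fluctuation a u M i₂ (renewalSet (ξ · ω))‖ ≤ S ^ 2 * (renewalSet (ξ · ω)).indicator 1 i₁ := by
    have h1 := abs_fluctuation_le (M := M) (a := a) hu0 hu1 i₁ (renewalSet (ξ · ω))
    have h2 := abs_fluctuation_le (M := M) (a := a) hu0 hu1 i₂ (renewalSet (ξ · ω))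
    have hle : (renewalSet (ξ · ω)).indicator (1 : ℕ → ℝ) i₂ ≤ 1 :=
      Set.indicator_apply_le' (fun _ => le_rfl) fun _ => zero_le_one
    rw [Real.norm_eq_abs, abs_mul]
    calc _ ≤ ((renewalSet (ξ · ω)).indicator 1 i₁ * S) * S :=
          mul_le_mul h1 (h2.trans (mul_le_of_le_one_left hS hle)) (abs_nonneg _)
            ((abs_nonneg _).trans h1)
      _ = S ^ 2 * (renewalSet (ξ · ω)).indicator 1 i₁ := by ring
  calc _ ≤ ‖∫ ω, fluctuation a u M i₁ (renewalSet (ξ · ω)) *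
        fluctuation a u M i₂ (renewalSet (ξ · ω)) ∂μ‖ := Real.le_norm_self _
    _ ≤ ∫ ω, S ^ 2 * (renewalSet (ξ · ω)).indicator 1 i₁ ∂μ :=
        norm_integral_le_of_norm_le (((integrable_const 1).indicator
          (measurableSet_setOf_mem_renewalSet hξ i₁)).const_mul _) (ae_of_all _ hbound)
    _ = S ^ 2 * u i₁ := by rw [integral_const_mul, integral_indicator_mem_renewalSet hξ, hu]

theorem sum_sum_integral_fluctuation_mul_le (hξ : ∀ n, Measurable (ξ n)) (hind : iIndepFun ξ μ)
    (hid : ∀ n, μ.map (ξ n) = μ.map (ξ 0)) (hpos : ∀ n ω, 1 ≤ ξ n ω)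
    (hu : ∀ j, u j = μ.real {ω | j ∈ renewalSet (ξ · ω)}) (s : Finset ℕ) :
    ∑ i₁ ∈ s, ∑ i₂ ∈ s,
        ∫ ω, fluctuation a u M i₁ (renewalSet (ξ · ω)) * fluctuation a u M i₂ (renewalSet (ξ · ω)) ∂μ
      ≤ 2 * M * ((∑ j ∈ Icc 1 M, |a j|) ^ 2 * ∑ i ∈ s, u i) := by
  rw [mul_sum]
  refine sum_sum_le_of_banded s (fun i₁ i₂ h => h.elim
    (integral_fluctuation_mul_fluctuation_of_add_le hξ hind hid hpos hu) fun h => ?_)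
    (integral_fluctuation_mul_fluctuation_le hξ hu)
  exact (integral_congr_ae (ae_of_all _ fun _ => mul_comm _ _)).trans
    (integral_fluctuation_mul_fluctuation_of_add_le hξ hind hid hpos hu h)

end Covariance

lemma sum_Icc_abs_rpow_neg_le {α : ℝ} (hα : 0 ≤ α) (M : ℕ) :
    ∑ j ∈ Icc 1 M, |(j : ℝ) ^ (-α)| ≤ M := by
  refine (sum_le_card_nsmul _ _ 1 fun j hj => ?_).trans (by simp)
  rw [abs_of_nonneg (by positivity)]
  exact Real.rpow_le_one_of_one_le_of_nonpos (by exact_mod_cast (Finset.mem_Icc.1 hj).1)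
    (by linarith)

lemma mul_rpow_sub_one_le_rpow_sub_rpow {α x : ℝ} (hα0 : 0 ≤ α) (hα1 : α ≤ 1) (hx : 0 ≤ x) :
    α * (x + 1) ^ (α - 1) ≤ (x + 1) ^ α - x ^ α := by
  have ht : 0 < x + 1 := by linarith
  have hs : -1 ≤ -1 / (x + 1) := by rw [neg_div, neg_le_neg_iff, div_le_one ht]; linarith
  -- Bernoulli: `(x / (x + 1)) ^ α ≤ 1 - α / (x + 1)`
  have hbern := rpow_one_add_le_one_add_mul_self hs hα0 hα1
  rw [show 1 + -1 / (x + 1) = x / (x + 1) by field_simp; ring, Real.div_rpow hx ht.le,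
    div_le_iff₀ (by positivity)] at hbern
  rw [Real.rpow_sub_one ht.ne']
  have : (1 + α * (-1 / (x + 1))) * (x + 1) ^ α = (x + 1) ^ α - α * ((x + 1) ^ α / (x + 1)) := by
    ring
  linarith

lemma sum_Icc_rpow_sub_one_le {α : ℝ} (hα0 : 0 < α) (hα1 : α ≤ 1) (r : ℕ) :
    ∑ i ∈ Icc 1 r, (i : ℝ) ^ (α - 1) ≤ (r : ℝ) ^ α / α := by
  induction r with
  | zero => simp [Real.zero_rpow hα0.ne']
  | succ r ih =>
    rw [sum_Icc_succ_top (by omega), le_div_iff₀ hα0, add_mul]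
    have := mul_rpow_sub_one_le_rpow_sub_rpow hα0.le hα1 (Nat.cast_nonneg r)
    rw [le_div_iff₀ hα0] at ih
    push_cast
    linarith

/-- Full covariance sum bound for the renewal fluctuations
`U_i = 1_{i∈τ} Σ_{j=1}^{⌈r^{α/4}⌉} j^{-α}(1_{i+j∈τ} - u(j))`:
if `u(n) ≤ C n^{α-1}` then `Σ_{i₁,i₂=1}^r E[U_{i₁} U_{i₂}] ≤ C' r^{7α/4}`. -/
theorem renewal_fluctuation_covariance_sum
    {Ω : Type*} [MeasurableSpace Ω] (μ : Measure Ω) [IsProbabilityMeasure μ]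
    (ξ : ℕ → Ω → ℕ) (hξmeas : ∀ n, Measurable (ξ n))
    (hξindep : iIndepFun ξ μ)
    (hξid : ∀ n, Measure.map (ξ n) μ = Measure.map (ξ 0) μ)
    (hξpos : ∀ n w, 1 ≤ ξ n w)
    (inτ : ℕ → Ω → Prop)
    (hinτ : ∀ n w, inτ n w ↔ ∃ k : ℕ, (∑ m' ∈ Finset.range k, ξ m' w) = n)
    (u : ℕ → ℝ) (hu : ∀ n, u n = (μ {w | inτ n w}).toReal)
    (α : ℝ) (hα0 : 0 < α) (hα1 : α < 1) (C : ℝ) (hC : 0 < C)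
    (hup : ∀ n : ℕ, 1 ≤ n → u n ≤ C * (n : ℝ) ^ (α - 1))
    (U : ℕ → ℕ → Ω → ℝ)
    (hU : ∀ r i w, U r i w =
      Set.indicator {w' | inτ i w'} (fun _ => (1:ℝ)) w *
        ∑ j ∈ Finset.Icc 1 ⌈(r : ℝ) ^ (α / 4)⌉₊, (j : ℝ) ^ (-α) *
          (Set.indicator {w' | inτ (i + j) w'} (fun _ => (1:ℝ)) w - u j)) :
    ∃ C' > 0, ∀ r : ℕ, 2 ≤ r →
      ∑ i₁ ∈ Finset.Icc 1 r, ∑ i₂ ∈ Finset.Icc 1 r,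
        ∫ w, U r i₁ w * U r i₂ w ∂μ
      ≤ C' * (r : ℝ) ^ (7 * α / 4) := by
  obtain rfl : inτ = fun n w => n ∈ renewalSet (ξ · w) := by ext n w; exact hinτ n w
  have hUfl (r i : ℕ) (w : Ω) : U r i w = fluctuation (fun j => (j : ℝ) ^ (-α)) u
      ⌈(r : ℝ) ^ (α / 4)⌉₊ i (renewalSet (ξ · w)) := hU r i w
  refine ⟨16 * C / α, by positivity, fun r hr => ?_⟩
  have hr1 : (1 : ℝ) ≤ r := by exact_mod_cast (by omega : 1 ≤ r)
  have hx : 1 ≤ (r : ℝ) ^ (α / 4) := Real.one_le_rpow hr1 (by positivity)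
  have hM : (⌈(r : ℝ) ^ (α / 4)⌉₊ : ℝ) ≤ 2 * (r : ℝ) ^ (α / 4) := Nat.ceil_le_two_mul (by linarith)
  have hsum_u : ∑ i ∈ Icc 1 r, u i ≤ C * ((r : ℝ) ^ α / α) :=
    (sum_le_sum fun i hi => hup i (Finset.mem_Icc.1 hi).1).trans <| by
      rw [← mul_sum]; exact mul_le_mul_of_nonneg_left (sum_Icc_rpow_sub_one_le hα0 hα1.le r) hC.le
  have hpow : ((r : ℝ) ^ (α / 4)) ^ 3 * (r : ℝ) ^ α = (r : ℝ) ^ (7 * α / 4) := by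
    rw [← Real.rpow_natCast, ← Real.rpow_mul (by positivity), ← Real.rpow_add (by positivity)]
    ring_nf
  simp only [hUfl]
  calc _ ≤ 2 * ⌈(r : ℝ) ^ (α / 4)⌉₊ * ((∑ j ∈ Icc 1 ⌈(r : ℝ) ^ (α / 4)⌉₊, |(j : ℝ) ^ (-α)|) ^ 2 *
          ∑ i ∈ Icc 1 r, u i) := sum_sum_integral_fluctuation_mul_le hξmeas hξindep hξid hξpos hu _
    _ ≤ 2 * (2 * (r : ℝ) ^ (α / 4)) * ((2 * (r : ℝ) ^ (α / 4)) ^ 2 * (C * ((r : ℝ) ^ α / α))) := by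
        have : 0 ≤ ∑ i ∈ Icc 1 r, u i := sum_nonneg fun i _ => hu i ▸ ENNReal.toReal_nonneg
        have := (sum_Icc_abs_rpow_neg_le hα0.le _).trans hM
        gcongr
    _ = 16 * C / α * (r : ℝ) ^ (7 * α / 4) := by rw [← hpow]; ring
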